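/- Every normal Suslin tree S with the reversed order is a countably distributive forcing: the intersection of countably many dense open subsets of S (in the reversed order) is dense. Equivalently, for every p ∈ S and every sequence ⟨Dₙ : n < ω⟩ of dense open subsets of S, there exists q ≥_S p with q ∈ Dₙ for all n. -/

import Mathlib

noncomputable section

open Cardinal

/-- The first uncountable ordinal. -/
def omegaOne : Ordinal := (Cardinal.aleph 1).ord

/-- A tree of height `ω₁`: a partial order in which the predecessors of every element form
a well-order, recorded by an ordinal-valued height function, with elements at every
countable height. -/
structure Tree1 where
  α : Type
  le : α → α → Prop
  le_refl : ∀ x, le x x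
  le_antisymm : ∀ x y, le x y → le y x → x = y
  le_trans : ∀ x y z, le x y → le y z → le x z
  ht : α → Ordinal
  ht_lt_omegaOne : ∀ x, ht x < omegaOne
  ht_strict : ∀ x y, le x y → x ≠ y → ht x < ht y
  pred_linear : ∀ x y z, le y x → le z x → (le y z ∨ le z y)
  pred_exists : ∀ x β, β < ht x → ∃ y, le y x ∧ ht y = β
  height_surj : ∀ β, β < omegaOne → ∃ x, ht x = β

namespace Tree1

variable (T : Tree1)

/-- Strict tree order. -/
def lt (x y : T.α) : Prop := T.le x y ∧ x ≠ y

def Incomp (x y : T.α) : Prop := ¬ T.le x y ∧ ¬ T.le y x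

/-- A chain: a set of pairwise comparable elements. -/
def Chain (C : Set T.α) : Prop := ∀ x ∈ C, ∀ y ∈ C, T.le x y ∨ T.le y x

/-- An antichain: a set of pairwise incomparable elements. -/
def Antichain (A : Set T.α) : Prop := ∀ x ∈ A, ∀ y ∈ A, x ≠ y → T.Incomp x y

/-- Level `β` of the tree. -/
def Level (β : Ordinal) : Set T.α := {x | T.ht x = β}

/-- An `ω₁`-tree has all levels countable. -/
def CountableLevels : Prop := ∀ β, (T.Level β).Countable

/-- Suslin: no uncountable chains and no uncountable antichains. -/
def Suslin : Prop :=
  (∀ C : Set T.α, T.Chain C → C.Countable) ∧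
  (∀ A : Set T.α, T.Antichain A → A.Countable)

def DownwardsClosed (W : Set T.α) : Prop := ∀ x y, T.le x y → y ∈ W → x ∈ W

/-- Normality: root, ≥ 2 immediate successors, unique limit nodes, successors at all
countable heights. -/
def Normal : Prop :=
  (∃ r, ∀ x, T.le r x) ∧
  (∀ x, ∃ y z : T.α, T.lt x y ∧ T.lt x z ∧ y ≠ z ∧
    T.ht y = T.ht x + 1 ∧ T.ht z = T.ht x + 1) ∧
  (∀ x y, T.ht x = T.ht y → Order.IsSuccLimit (T.ht x) → (∀ z, T.lt z x ↔ T.lt z y) → x = y) ∧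
  (∀ x β, T.ht x ≤ β → β < omegaOne → ∃ y, T.le x y ∧ T.ht y = β)

theorem lt_wf : WellFounded T.lt :=
  Subrelation.wf (fun {x y} h => T.ht_strict x y h.1 h.2) (InvImage.wf T.ht wellFounded_lt)

/-- The height of an element of a subtree `U ⊆ T` computed in the induced order. -/
def subHt (U : Set T.α) (x : U) : Ordinal :=
  @IsWellFounded.rank U (InvImage T.lt Subtype.val) ⟨InvImage.wf Subtype.val T.lt_wf⟩ x

/-- Levels of the subtree `U` (in the induced order) are countable. -/
def SubLevelsCountable (U : Set T.α) : Prop :=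
  ∀ β, {x : U | T.subHt U x = β}.Countable

/-- An Aronszajn subtree: an uncountable subset which, with the induced order, has countable
levels and no uncountable chain. -/
def AronszajnSubtree (U : Set T.α) : Prop :=
  ¬ U.Countable ∧ T.SubLevelsCountable U ∧ ∀ C ⊆ U, T.Chain C → C.Countable

/-- The downward closure of a set. -/
def DownwardClosure (U : Set T.α) : Set T.α := {x | ∃ y ∈ U, T.le x y}

/-- A cofinal branch: a downwards closed chain meeting every level. -/
def CofinalBranch (b : Set T.α) : Prop :=
  T.DownwardsClosed b ∧ T.Chain b ∧
    ∀ β, β < omegaOne → ∃ x ∈ b, T.ht x = β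

end Tree1

/-!
Choose in each `Dₙ` a maximal antichain. By the Suslin property it is countable, so its heights
are bounded by some `γₙ < ω₁`; by maximality and openness, `Dₙ` then contains every node of
height above `γₙ`. The supremum of the countably many `γₙ` is still below `ω₁`, and by
normality `p` has an extension above it, which lies in every `Dₙ`.
-/

theorem iSup_lt_omegaOne {ι : Type*} [Countable ι] {f : ι → Ordinal.{0}}
    (hf : ∀ i, f i < omegaOne) : ⨆ i, f i < omegaOne := by
  refine Ordinal.lift_iSup_lt_of_lt_cof ?_ hf
  rw [← Ordinal.lift_cof, omegaOne, isRegular_aleph_one.cof_ord, lift_aleph, Ordinal.lift_one]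
  exact (lift_le_aleph0.2 mk_le_aleph0).trans_lt aleph0_lt_aleph_one

theorem succ_lt_omegaOne {γ : Ordinal.{0}} (hγ : γ < omegaOne) : Order.succ γ < omegaOne :=
  (isSuccLimit_ord (aleph0_le_aleph 1)).succ_lt hγ

namespace Tree1

variable (T : Tree1)

theorem ht_le_of_le {x y : T.α} (h : T.le x y) : T.ht x ≤ T.ht y := by
  by_cases hxy : x = y
  · rw [hxy]
  · exact (T.ht_strict x y h hxy).le

theorem exists_maximal_antichain_subset (D : Set T.α) :
    ∃ A ⊆ D, T.Antichain A ∧ ∀ y ∈ D, ∃ a ∈ A, T.le a y ∨ T.le y a := by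
  obtain ⟨A, hA⟩ := zorn_subset {A : Set T.α | A ⊆ D ∧ T.Antichain A} (by
    intro c hc hchain
    refine ⟨⋃₀ c, ⟨Set.sUnion_subset fun s hs => (hc hs).1, ?_⟩,
      fun s hs => Set.subset_sUnion_of_mem hs⟩
    rintro x ⟨s, hs, hxs⟩ y ⟨t, ht, hyt⟩ hxy
    rcases hchain.total hs ht with hst | hts
    · exact (hc ht).2 x (hst hxs) y hyt hxy
    · exact (hc hs).2 x hxs y (hts hyt) hxy)
  refine ⟨A, hA.prop.1, hA.prop.2, fun y hy => ?_⟩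
  by_contra! hincomp
  have hyA : y ∉ A := fun h => (hincomp y h).1 (T.le_refl y)
  have hext : insert y A ∈ {A : Set T.α | A ⊆ D ∧ T.Antichain A} := by
    refine ⟨Set.insert_subset hy hA.prop.1, ?_⟩
    rintro x (rfl | hx) z (rfl | hz) hxz
    · exact absurd rfl hxz
    · exact ⟨(hincomp z hz).2, (hincomp z hz).1⟩
    · exact hincomp x hx
    · exact hA.prop.2 x hx z hz hxz
  exact hyA (hA.eq_of_subset hext (Set.subset_insert y A) ▸ Set.mem_insert y A)

theorem exists_forall_ht_gt_mem_of_dense_open {T : Tree1} (hS : T.Suslin) {D : Set T.α}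
    (hdense : ∀ x, ∃ y ∈ D, T.le x y) (hopen : ∀ x ∈ D, ∀ y, T.le x y → y ∈ D) :
    ∃ γ < omegaOne, ∀ q, γ < T.ht q → q ∈ D := by
  obtain ⟨A, hAD, hAanti, hAmax⟩ := T.exists_maximal_antichain_subset D
  have : Countable A := (hS.2 A hAanti).to_subtype
  refine ⟨⨆ a : A, T.ht a, iSup_lt_omegaOne fun a => T.ht_lt_omegaOne a,
    fun q hq => ?_⟩
  obtain ⟨y, hyD, hqy⟩ := hdense q
  obtain ⟨a, haA, hay⟩ := hAmax y hyD
  have hq_not_le_a : ¬ T.le q a := fun hqa =>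
    (T.ht_le_of_le hqa).not_gt ((Ordinal.le_iSup (fun a : A => T.ht a) ⟨a, haA⟩).trans_lt hq)
  have haq : T.le a q := by
    rcases hay with hay | hya
    · exact (T.pred_linear y a q hay hqy).resolve_right hq_not_le_a
    · exact absurd (T.le_trans q y a hqy hya) hq_not_le_a
  exact hopen a (hAD haA) q haq

theorem exists_le_ht_gt {T : Tree1} (hN : T.Normal) (p : T.α) {γ : Ordinal}
    (hγ : γ < omegaOne) : ∃ q, T.le p q ∧ γ < T.ht q := by
  obtain ⟨q, hpq, hq⟩ := hN.2.2.2 p (max (T.ht p) (Order.succ γ)) (le_max_left _ _)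
    (max_lt (T.ht_lt_omegaOne p) (succ_lt_omegaOne hγ))
  exact ⟨q, hpq, hq ▸ (Order.lt_succ γ).trans_le (le_max_right _ _)⟩

end Tree1

/-- a normal Suslin tree, with the reversed order, is countably distributive:
below any condition there is a condition in the intersection of countably many dense open
sets. -/
theorem rigidKurepa_stmt10 (S : Tree1) (hN : S.Normal) (hS : S.Suslin)
    (p : S.α) (D : ℕ → Set S.α)
    (hdense : ∀ n, ∀ x : S.α, ∃ y ∈ D n, S.le x y)
    (hopen : ∀ n, ∀ x ∈ D n, ∀ y : S.α, S.le x y → y ∈ D n) :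
    ∃ q : S.α, S.le p q ∧ ∀ n, q ∈ D n := by
  choose γ hγ hmem using fun n =>
    Tree1.exists_forall_ht_gt_mem_of_dense_open hS (hdense n) (hopen n)
  obtain ⟨q, hpq, hq⟩ := Tree1.exists_le_ht_gt hN p (iSup_lt_omegaOne hγ)
  exact ⟨q, hpq, fun n => hmem n q ((Ordinal.le_iSup γ n).trans_lt hq)⟩
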